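/- arXiv:2311.15651 — 3 statements merged into one kernel-verified Lean document; each statement's English description precedes it below -/
import Mathlib

section
/- Let α ∈ (0,1), c > 0, let f be continuous, and let φ ∈ C²_b(ℝ) be a strictly increasing function satisfying c^α ∂^α_ξ φ(ξ) = φ''(ξ) + f(φ(ξ)) for all ξ ∈ ℝ. Then v(t,x) := φ(x + ct) is a strict sub-solution of the time-fractional equation: for every t > 0 and x ∈ ℝ, the Caputo derivative (1/Γ(1-α)) ∫₀^t (∂v/∂s)(s,x) (t-s)^{-α} ds, which equals (c^α/Γ(1-α)) ∫₀^{ct} φ'(x + ct - s) s^{-α} ds, is strictly less than φ''(x + ct) + f(φ(x + ct)). -/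
open Real MeasureTheory Filter Topology

/-- The fractional derivative ∂^α_ξ ψ(ξ) := (1/Γ(1-α)) ∫₀^∞ ψ'(ξ - s) s^{-α} ds. -/
noncomputable def fracD (α : ℝ) (ψ : ℝ → ℝ) (ξ : ℝ) : ℝ :=
  (1 / Real.Gamma (1 - α)) * ∫ s in Set.Ioi (0 : ℝ), deriv ψ (ξ - s) / s ^ α

/-- The critical speed c*_α = (2^{1/α}/√α) (r/(2-α))^{(2-α)/(2α)}. -/
noncomputable def cStar (α r : ℝ) : ℝ :=
  ((2 : ℝ) ^ (1 / α) / Real.sqrt α) * (r / (2 - α)) ^ ((2 - α) / (2 * α))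

/-- ψ ∈ C²_b(ℝ): twice continuously differentiable with bounded derivatives up to order 2. -/
def C2b (ψ : ℝ → ℝ) : Prop :=
  ContDiff ℝ 2 ψ ∧ (∃ C, ∀ x, |ψ x| ≤ C) ∧ (∃ C, ∀ x, |deriv ψ x| ≤ C) ∧
    ∃ C, ∀ x, |deriv (deriv ψ) x| ≤ C

/-- The monostable KPP assumption with constants `M`, `a`. -/
def KPP (f : ℝ → ℝ) (M a : ℝ) : Prop :=
  ContDiff ℝ 1 f ∧ f 0 = 0 ∧ f 1 = 0 ∧ (∀ u, 0 < u → u < 1 → 0 < f u) ∧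
    0 < M ∧ 0 < a ∧ ∀ u ∈ Set.Icc (0 : ℝ) 1,
      -M * u ^ (1 + a) ≤ f u - deriv f 0 * u ∧ f u - deriv f 0 * u ≤ 0

/-!
Substituting `s ↦ c (t - s)` turns the Caputo derivative of `v(t, x) = φ(x + ct)` into
`c^α / Γ(1-α)` times the integral defining `∂^α φ (x + ct)`, truncated to `s ≤ ct`.
The missing tail `∫_{ct}^∞ φ'(x + ct - s) s^{-α} ds` is finite because `φ` is monotone and
bounded, and positive because `φ` is strictly increasing, so the truncated quantity lies
strictly below `c^α ∂^α φ = φ'' + f(φ)`.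
-/

open Set

lemma integrableOn_Ioc_div_rpow {g : ℝ → ℝ} {C α : ℝ} (hg : AEStronglyMeasurable g)
    (hC : ∀ s, |g s| ≤ C) (hα : α < 1) (A : ℝ) :
    IntegrableOn (fun s => g s / s ^ α) (Ioc 0 A) := by
  have hkernel : IntegrableOn (fun s : ℝ => C * s ^ (-α)) (Ioc 0 A) :=
    (intervalIntegral.intervalIntegrable_rpow' (by linarith)).1.const_mul C
  refine hkernel.mono' (hg.restrict.div₀ (measurable_id.pow_const α).aestronglyMeasurable) ?_
  filter_upwards [ae_restrict_mem measurableSet_Ioc] with s hs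
  rw [norm_div, Real.norm_eq_abs, Real.norm_of_nonneg (rpow_nonneg hs.1.le α),
    rpow_neg hs.1.le, ← div_eq_mul_inv]
  exact div_le_div_of_nonneg_right (hC s) (rpow_nonneg hs.1.le α)

lemma IntegrableOn.div_rpow_Ioi {g : ℝ → ℝ} {α A : ℝ} (hg : IntegrableOn g (Ioi A))
    (hA : 0 < A) (hα : 0 ≤ α) :
    IntegrableOn (fun s => g s / s ^ α) (Ioi A) := by
  refine (hg.norm.div_const (A ^ α)).mono'
    (hg.aestronglyMeasurable.div₀ (measurable_id.pow_const α).aestronglyMeasurable) ?_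
  filter_upwards [ae_restrict_mem measurableSet_Ioi] with s hs
  rw [norm_div, Real.norm_of_nonneg (rpow_nonneg (hA.trans hs).le α)]
  gcongr
  exact hs.le

lemma setIntegral_Ioi_pos_of_continuousOn {g : ℝ → ℝ} {a b : ℝ} (hab : a < b)
    (hg : IntegrableOn g (Ioi a)) (hcont : ContinuousOn g (Icc a b))
    (hnonneg : ∀ x ∈ Ioi a, 0 ≤ g x) (hpos : ∃ c ∈ Icc a b, 0 < g c) :
    0 < ∫ x in Ioi a, g x := by
  have hnonneg_ae : 0 ≤ᵐ[volume.restrict (Ioi a)] g :=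
    (ae_restrict_iff' measurableSet_Ioi).2 (ae_of_all _ hnonneg)
  calc 0 < ∫ x in a..b, g x :=
        intervalIntegral.integral_pos hab hcont (fun x hx => hnonneg x hx.1) hpos
    _ = ∫ x in Ioc a b, g x := intervalIntegral.integral_of_le hab.le
    _ ≤ ∫ x in Ioi a, g x := setIntegral_mono_set hg hnonneg_ae Ioc_subset_Ioi_self.eventuallyLE

lemma StrictMono.exists_deriv_pos {φ : ℝ → ℝ} (hφ : StrictMono φ) (hd : Differentiable ℝ φ)
    {a b : ℝ} (hab : a < b) : ∃ z ∈ Ioo a b, 0 < deriv φ z := by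
  obtain ⟨z, hz, hslope⟩ := exists_deriv_eq_slope φ hab hd.continuous.continuousOn
    hd.differentiableOn
  exact ⟨z, hz, hslope ▸ div_pos (sub_pos.2 (hφ hab)) (sub_pos.2 hab)⟩

section Tail

variable {φ : ℝ → ℝ} (hd : Differentiable ℝ φ)
include hd

lemma integrableOn_Ioi_deriv_comp_const_sub (hm : Monotone φ) (hb : BddBelow (range φ))
    (ξ A : ℝ) : IntegrableOn (fun s => deriv φ (ξ - s)) (Ioi A) := by
  have hlim : Tendsto (fun s => -φ (ξ - s)) atTop (𝓝 (-⨅ y, φ y)) :=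
    ((tendsto_atBot_ciInf hm hb).comp (tendsto_atBot_add_const_left atTop ξ
      tendsto_neg_atTop_atBot)).neg
  refine integrableOn_Ioi_deriv_of_nonneg' (fun s _ => ?_) (fun s _ => hm.deriv_nonneg) hlim
  simpa using ((hd (ξ - s)).hasDerivAt.comp_const_sub ξ s).fun_neg

variable (hm : StrictMono φ) (hb : BddBelow (range φ)) {α A : ℝ} (hα : 0 ≤ α) (hA : 0 < A)
include hm hb hα hA

lemma integrableOn_Ioi_deriv_comp_const_sub_div_rpow (ξ : ℝ) :
    IntegrableOn (fun s => deriv φ (ξ - s) / s ^ α) (Ioi A) :=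
  IntegrableOn.div_rpow_Ioi (integrableOn_Ioi_deriv_comp_const_sub hd hm.monotone hb ξ A) hA hα

lemma setIntegral_Ioi_deriv_comp_const_sub_div_rpow_pos (hd' : Continuous (deriv φ)) (ξ : ℝ) :
    0 < ∫ s in Ioi A, deriv φ (ξ - s) / s ^ α := by
  obtain ⟨z, hz, hz_pos⟩ := hm.exists_deriv_pos hd (show ξ - A - 1 < ξ - A by linarith)
  refine setIntegral_Ioi_pos_of_continuousOn (b := A + 1) (by linarith)
    (integrableOn_Ioi_deriv_comp_const_sub_div_rpow hd hm hb hα hA ξ) ?_ ?_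
    ⟨ξ - z, ⟨by linarith [hz.2], by linarith [hz.1]⟩, ?_⟩
  · refine ((hd'.comp (continuous_const.sub continuous_id)).continuousOn).div
      (continuousOn_id.rpow_const fun s _ => Or.inr hα) fun s hs => ?_
    exact (rpow_pos_of_pos (hA.trans_le hs.1) α).ne'
  · exact fun s hs => div_nonneg hm.monotone.deriv_nonneg (rpow_nonneg (hA.trans hs).le α)
  · simpa using div_pos hz_pos (rpow_pos_of_pos (by linarith [hz.2] : 0 < ξ - z) α)

end Tail

lemma setIntegral_deriv_comp_add_mul_div_rpow (φ : ℝ → ℝ) {c t : ℝ} (hc : 0 < c) (ht : 0 ≤ t)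
    (α x : ℝ) :
    ∫ s in Ioc 0 t, deriv (fun τ => φ (x + c * τ)) s / (t - s) ^ α
      = c ^ α * ∫ s in Ioc 0 (c * t), deriv φ (x + c * t - s) / s ^ α := by
  set H : ℝ → ℝ := fun s => deriv φ (x + c * t - s) / s ^ α
  have hcα : c ^ α ≠ 0 := (rpow_pos_of_pos hc α).ne'
  have hintegrand : ∀ s ∈ uIcc 0 t,
      deriv (fun τ => φ (x + c * τ)) s / (t - s) ^ α = c * c ^ α * H (c * t - c * s) := by
    intro s hs
    rw [uIcc_of_le ht] at hs
    have hchain : deriv (fun τ => φ (x + c * τ)) s = c * deriv φ (x + c * s) := by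
      simpa [deriv_comp_const_add] using deriv_comp_mul_left c (fun u => φ (x + u)) s
    have hshift : x + c * t - (c * t - c * s) = x + c * s := by ring
    show _ = c * c ^ α * (deriv φ (x + c * t - (c * t - c * s)) / (c * t - c * s) ^ α)
    rw [hchain, hshift, ← mul_sub, mul_rpow hc.le (sub_nonneg.2 hs.2), mul_assoc,
      ← mul_div_assoc, mul_div_mul_left _ _ hcα, mul_div_assoc]
  rw [← intervalIntegral.integral_of_le ht, ← intervalIntegral.integral_of_le (by positivity),
    intervalIntegral.integral_congr hintegrand, intervalIntegral.integral_const_mul,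
    intervalIntegral.integral_comp_sub_mul H hc.ne', sub_self, mul_zero, sub_zero, smul_eq_mul]
  field_simp
  rfl

theorem asymptotic_traveling_wave_is_strict_subsolution_general
    (α : ℝ) (hα : α ∈ Set.Ioo (0 : ℝ) 1) (c : ℝ) (hc : 0 < c)
    (f : ℝ → ℝ)
    (φ : ℝ → ℝ) (hφ : C2b φ) (hmono : StrictMono φ)
    (heq : ∀ ξ, c ^ α * fracD α φ ξ = deriv (deriv φ) ξ + f (φ ξ)) :
    ∀ t > (0 : ℝ), ∀ x : ℝ,
      ((1 / Real.Gamma (1 - α)) *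
          ∫ s in Set.Ioc (0 : ℝ) t, deriv (fun τ => φ (x + c * τ)) s / (t - s) ^ α)
        = ((c ^ α / Real.Gamma (1 - α)) *
            ∫ s in Set.Ioc (0 : ℝ) (c * t), deriv φ (x + c * t - s) / s ^ α) ∧
      ((c ^ α / Real.Gamma (1 - α)) *
          ∫ s in Set.Ioc (0 : ℝ) (c * t), deriv φ (x + c * t - s) / s ^ α)
        < deriv (deriv φ) (x + c * t) + f (φ (x + c * t)) := by
  intro t ht x
  obtain ⟨hα0, hα1⟩ := hα
  obtain ⟨hφ2, ⟨B, hB⟩, ⟨C, hC⟩, -⟩ := hφ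
  have hd : Differentiable ℝ φ := hφ2.differentiable (by norm_num)
  have hd' : Continuous (deriv φ) := hφ2.continuous_deriv (by norm_num)
  have hb : BddBelow (range φ) := ⟨-B, forall_mem_range.2 fun y => neg_le_of_abs_le (hB y)⟩
  have hA : 0 < c * t := mul_pos hc ht
  set ξ := x + c * t
  set G : ℝ → ℝ := fun s => deriv φ (ξ - s) / s ^ α
  have hG_Ioc : IntegrableOn G (Ioc 0 (c * t)) := integrableOn_Ioc_div_rpow
    (hd'.comp (continuous_const.sub continuous_id)).aestronglyMeasurable (fun s => hC _) hα1 _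
  have hG_Ioi : IntegrableOn G (Ioi (c * t)) :=
    integrableOn_Ioi_deriv_comp_const_sub_div_rpow hd hmono hb hα0.le hA ξ
  have hsplit : ∫ s in Ioi 0, G s = (∫ s in Ioc 0 (c * t), G s) + ∫ s in Ioi (c * t), G s := by
    rw [← Ioc_union_Ioi_eq_Ioi hA.le]
    exact setIntegral_union (Ioc_disjoint_Ioi le_rfl) measurableSet_Ioi hG_Ioc hG_Ioi
  have htail : 0 < c ^ α / Gamma (1 - α) * ∫ s in Ioi (c * t), G s :=
    mul_pos (div_pos (rpow_pos_of_pos hc α) (Gamma_pos_of_pos (by linarith)))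
      (setIntegral_Ioi_deriv_comp_const_sub_div_rpow_pos hd hmono hb hα0.le hA hd' ξ)
  refine ⟨by rw [setIntegral_deriv_comp_add_mul_div_rpow φ hc ht.le]; ring, ?_⟩
  calc c ^ α / Gamma (1 - α) * ∫ s in Ioc 0 (c * t), G s
      < c ^ α / Gamma (1 - α) * ((∫ s in Ioc 0 (c * t), G s) + ∫ s in Ioi (c * t), G s) := by
        linarith
    _ = c ^ α * fracD α φ ξ := by rw [fracD, ← hsplit]; ring
    _ = deriv (deriv φ) ξ + f (φ ξ) := heq ξ

/-- An asymptotic traveling wave profile yields a strict sub-solution `v(t,x) = φ(x+ct)`: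
the Caputo derivative of `v` in time equals the truncated moving-frame fractional
derivative and is strictly below `φ'' + f(φ)` at the moving coordinate. -/
theorem asymptotic_traveling_wave_is_strict_subsolution
    (α : ℝ) (hα : α ∈ Set.Ioo (0 : ℝ) 1) (c : ℝ) (hc : 0 < c)
    (f : ℝ → ℝ) (hf : Continuous f)
    (φ : ℝ → ℝ) (hφ : C2b φ) (hmono : StrictMono φ)
    (heq : ∀ ξ, c ^ α * fracD α φ ξ = deriv (deriv φ) ξ + f (φ ξ)) :
    ∀ t > (0 : ℝ), ∀ x : ℝ,
      ((1 / Real.Gamma (1 - α)) *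
          ∫ s in Set.Ioc (0 : ℝ) t, deriv (fun τ => φ (x + c * τ)) s / (t - s) ^ α)
        = ((c ^ α / Real.Gamma (1 - α)) *
            ∫ s in Set.Ioc (0 : ℝ) (c * t), deriv φ (x + c * t - s) / s ^ α) ∧
      ((c ^ α / Real.Gamma (1 - α)) *
          ∫ s in Set.Ioc (0 : ℝ) (c * t), deriv φ (x + c * t - s) / s ^ α)
        < deriv (deriv φ) (x + c * t) + f (φ (x + c * t)) :=
  asymptotic_traveling_wave_is_strict_subsolution_general α hα c hc f φ hφ hmono heq
end

section
/- Let α ∈ (0,1), c > 0, κ > 0, and suppose ψ ∈ C¹_b(ℝ) ∩ C²(ℝ) satisfies L ψ(ξ) ≤ 0 for all ξ ∈ ℝ, liminf_{ξ→-∞} ψ(ξ) ≥ 0 and limsup_{ξ→+∞} ψ(ξ) ≥ 0. Then ψ(ξ) ≥ 0 for all ξ ∈ ℝ. Furthermore, if ψ(ξ*) = 0 for some ξ* ∈ ℝ, then ψ(ξ) = 0 for all ξ ≤ ξ*. -/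
open Real MeasureTheory Filter Topology

/-- ψ ∈ C¹_b(ℝ): continuously differentiable, bounded together with its derivative. -/
def C1b (ψ : ℝ → ℝ) : Prop :=
  ContDiff ℝ 1 ψ ∧ (∃ C, ∀ x, |ψ x| ≤ C) ∧ ∃ C, ∀ x, |deriv ψ x| ≤ C

/-!
If `ψ` took a negative value, then for small `ε > 0` the function `w = ψ + ε e^{κξ/2}` would
attain a negative global minimum at some `ξ₀`: `w → +∞` at `+∞` because `ψ` is bounded, and
`liminf w ≥ 0` at `-∞`. At `ξ₀` we have `ψ(ξ₀ - s) ≥ ψ(ξ₀)` for `s > 0`, so the Marchaud form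
`∂^α ψ(ξ₀) = α/Γ(1-α) ∫₀^∞ (ψ(ξ₀) - ψ(ξ₀ - s)) s^{-1-α} ds`, obtained by integrating by parts,
is `≤ 0`, while `ψ''(ξ₀) ≥ -(κ²/4) ε e^{κξ₀/2}`; together these give `Lψ(ξ₀) > 0`.

If `ψ ≥ 0` vanishes at `ξ*`, then `ψ''(ξ*) ≥ 0`, and `Lψ(ξ*) ≤ 0` becomes
`∫₀^∞ ψ(ξ* - s) s^{-1-α} ds ≤ 0`, so `ψ = 0` on `(-∞, ξ*]`. This needs the integral defining
`fracD` to converge absolutely; otherwise the Bochner integral is `0`. Absolute convergence does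
not depend on `ξ`, so in that case `fracD α ψ ≡ 0`, `Lψ ≤ 0` reads `ψ'' ≤ κ² ψ`, and Taylor's
formula shows that a zero of `ψ ≥ 0` spreads to the left over intervals of length `1/κ`.
-/

open Set

theorem IsLocalMin.deriv_deriv_nonneg {f : ℝ → ℝ} {x : ℝ} (hmin : IsLocalMin f x)
    (hc : ContinuousAt f x) : 0 ≤ deriv (deriv f) x := by
  by_contra! hneg
  have hmax := isLocalMax_of_deriv_deriv_neg hneg hmin.deriv_eq_zero hc
  have hconst : f =ᶠ[𝓝 x] fun _ => f x := by
    filter_upwards [hmin, hmax] with y hy₁ hy₂ using le_antisymm hy₂ hy₁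
  have h := hconst.deriv.deriv_eq
  simp only [deriv_const', deriv_const] at h
  exact hneg.ne h

theorem deriv_deriv_add_mul_exp {f : ℝ → ℝ} {x : ℝ} (hf : Differentiable ℝ f)
    (hf' : DifferentiableAt ℝ (deriv f) x) (ε β : ℝ) :
    deriv (deriv fun y => f y + ε * exp (β * y)) x
      = deriv (deriv f) x + ε * β ^ 2 * exp (β * x) := by
  have hexp : ∀ y, HasDerivAt (fun y => exp (β * y)) (β * exp (β * y)) y := fun y => by
    simpa [mul_comm] using ((hasDerivAt_id y).const_mul β).exp
  have hderiv : deriv (fun y => f y + ε * exp (β * y))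
      = fun y => deriv f y + ε * (β * exp (β * y)) :=
    funext fun y => ((hf y).hasDerivAt.add ((hexp y).const_mul ε)).deriv
  rw [hderiv, (hf'.hasDerivAt.fun_add (((hexp x).const_mul β).const_mul ε)).deriv]
  ring

theorem exists_forall_add_mul_exp_le {f : ℝ → ℝ} {m ε β ξ : ℝ} (hf : Continuous f)
    (hm : ∀ x, m ≤ f x) (hε : 0 < ε) (hβ : 0 < β)
    (hξ : f ξ + ε * exp (β * ξ) < liminf f atBot) :
    ∃ ξ₀, ∀ y, f ξ₀ + ε * exp (β * ξ₀) ≤ f y + ε * exp (β * y) := by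
  have hbot' : ∀ᶠ y in atBot, f ξ + ε * exp (β * ξ) ≤ f y + ε * exp (β * y) := by
    filter_upwards [eventually_lt_of_lt_liminf hξ (isBoundedUnder_of ⟨m, hm⟩)]
      with y hy
    have : 0 < ε * exp (β * y) := by positivity
    linarith
  have htop : Tendsto (fun y => m + ε * exp (β * y)) atTop atTop :=
    tendsto_atTop_add_const_left _ m
      ((tendsto_exp_atTop.comp (tendsto_id.const_mul_atTop hβ)).const_mul_atTop hε)
  have htop' : ∀ᶠ y in atTop, f ξ + ε * exp (β * ξ) ≤ f y + ε * exp (β * y) :=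
    (tendsto_atTop_mono (fun y => by linarith [hm y]) htop).eventually_ge_atTop _
  exact (by fun_prop : Continuous fun y => f y + ε * exp (β * y)).exists_forall_le' ξ
    (by rw [cocompact_eq_atBot_atTop]; exact eventually_sup.2 ⟨hbot', htop'⟩)

theorem exists_mem_uIoo_eq_deriv_deriv_mul_sq {f : ℝ → ℝ} {b x : ℝ} (hf : ContDiff ℝ 2 f)
    (hb : f b = 0) (hb' : deriv f b = 0) (hx : b ≠ x) :
    ∃ c ∈ uIoo b x, f x = deriv (deriv f) c * (x - b) ^ 2 / 2 := by
  obtain ⟨c, hc, h⟩ := taylor_mean_remainder_lagrange_iteratedDeriv (n := 1) hx hf.contDiffOn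
  have hderivWithin : derivWithin f (uIcc b x) b = 0 := by
    rw [(hf.differentiable two_ne_zero b).derivWithin (uniqueDiffOn_uIcc hx b left_mem_uIcc), hb']
  refine ⟨c, hc, ?_⟩
  simpa [taylor_within_apply, Finset.sum_range_succ, hb, hderivWithin, iteratedDeriv_succ] using h

theorem Iic_subset_of_forall_Icc_sub_subset {Z : Set ℝ} {δ b : ℝ} (hδ : 0 < δ)
    (hZ : ∀ a ∈ Z, Icc (a - δ) a ⊆ Z) (hb : b ∈ Z) : Iic b ⊆ Z := by
  have hcover : ∀ n : ℕ, b - n * δ ∈ Z ∧ Icc (b - n * δ) b ⊆ Z := by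
    intro n
    induction n with
    | zero => simpa using hb
    | succ n ih =>
      have hstep := hZ _ ih.1
      push_cast
      refine ⟨hstep ⟨by linarith, by linarith⟩, fun x hx => ?_⟩
      rcases le_or_gt (b - n * δ) x with h | h
      · exact ih.2 ⟨h, hx.2⟩
      · exact hstep ⟨by linarith [hx.1], h.le⟩
  intro x hx
  obtain ⟨n, hn⟩ := exists_nat_ge ((b - x) / δ)
  rw [div_le_iff₀ hδ] at hn
  exact (hcover n).2 ⟨by linarith, hx⟩

theorem eqOn_zero_Icc_of_deriv_deriv_le {ψ : ℝ → ℝ} {κ b : ℝ} (hκ : 0 < κ)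
    (hψ : ContDiff ℝ 2 ψ) (hnonneg : ∀ x, 0 ≤ ψ x)
    (hψ'' : ∀ x, deriv (deriv ψ) x ≤ κ ^ 2 * ψ x) (hb : ψ b = 0) :
    EqOn ψ 0 (Icc (b - κ⁻¹) b) := by
  have hb' : deriv ψ b = 0 :=
    IsLocalMin.deriv_eq_zero (Eventually.of_forall fun y => hb ▸ hnonneg y)
  obtain ⟨m, hm, hmax⟩ := isCompact_Icc.exists_isMaxOn (s := Icc (b - κ⁻¹) b)
    (nonempty_Icc.2 (by linarith [inv_pos.2 hκ])) hψ.continuous.continuousOn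
  have hhalf : ∀ x ∈ Icc (b - κ⁻¹) b, ψ x ≤ ψ m / 2 := by
    intro x hx
    rcases eq_or_ne b x with rfl | hne
    · linarith [hnonneg m]
    obtain ⟨c, hc, hx_eq⟩ := exists_mem_uIoo_eq_deriv_deriv_mul_sq hψ hb hb' hne
    rw [uIoo_of_ge hx.2] at hc
    have hsq : (x - b) ^ 2 ≤ κ⁻¹ ^ 2 := by nlinarith [hx.1, hx.2]
    calc ψ x = deriv (deriv ψ) c * (x - b) ^ 2 / 2 := hx_eq
      _ ≤ κ ^ 2 * ψ m * (x - b) ^ 2 / 2 := by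
          gcongr
          exact (hψ'' c).trans (by gcongr; exact hmax ⟨by linarith [hx.1, hc.1], hc.2.le⟩)
      _ ≤ κ ^ 2 * ψ m * κ⁻¹ ^ 2 / 2 := by
          have := hnonneg m
          gcongr
      _ = ψ m / 2 := by field_simp
  intro x hx
  have hm_le := hhalf m hm
  have hx_le : ψ x ≤ ψ m := hmax hx
  show ψ x = 0
  exact le_antisymm (by linarith [hnonneg m]) (hnonneg x)

theorem eqOn_zero_Iic_of_deriv_deriv_le {ψ : ℝ → ℝ} {κ b : ℝ} (hκ : 0 < κ)
    (hψ : ContDiff ℝ 2 ψ) (hnonneg : ∀ x, 0 ≤ ψ x)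
    (hψ'' : ∀ x, deriv (deriv ψ) x ≤ κ ^ 2 * ψ x) (hb : ψ b = 0) :
    EqOn ψ 0 (Iic b) :=
  Iic_subset_of_forall_Icc_sub_subset (Z := {x | ψ x = 0}) (inv_pos.2 hκ)
    (fun _ ha => eqOn_zero_Icc_of_deriv_deriv_le hκ hψ hnonneg hψ'' ha) hb

theorem setIntegral_pos_of_continuousOn {X : Type*} [TopologicalSpace X] [MeasurableSpace X]
    [OpensMeasurableSpace X] {μ : Measure X} [μ.IsOpenPosMeasure] {f : X → ℝ} {U : Set X}
    (hU : IsOpen U) (hf : ContinuousOn f U) (hint : IntegrableOn f U μ)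
    (hnonneg : ∀ x ∈ U, 0 ≤ f x) {x : X} (hx : x ∈ U) (hfx : 0 < f x) :
    0 < ∫ y in U, f y ∂μ := by
  rw [setIntegral_pos_iff_support_of_nonneg_ae
    ((ae_restrict_iff' hU.measurableSet).2 (Eventually.of_forall hnonneg)) hint]
  refine ((hf.isOpen_inter_preimage hU isOpen_Ioi).measure_pos μ ⟨x, hx, hfx⟩).trans_le
    (measure_mono fun y hy => ⟨hy.2.ne', hy.1⟩)

theorem abs_sub_le_mul_abs_sub_of_abs_deriv_le {f : ℝ → ℝ} {C : ℝ} (hf : Differentiable ℝ f)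
    (hC : ∀ x, |deriv f x| ≤ C) (x y : ℝ) : |f x - f y| ≤ C * |x - y| := by
  simpa only [Real.norm_eq_abs] using convex_univ.norm_image_sub_le_of_norm_deriv_le
    (fun z _ => hf z) (fun z _ => by simpa only [Real.norm_eq_abs] using hC z)
    (mem_univ y) (mem_univ x)

theorem integrableOn_Ioc_of_abs_le_mul_rpow_neg {f : ℝ → ℝ} {α C X : ℝ} (hα : α < 1)
    (hf : AEStronglyMeasurable f (volume.restrict (Ioc 0 X)))
    (hC : ∀ s ∈ Ioc 0 X, |f s| ≤ C * s ^ (-α)) : IntegrableOn f (Ioc 0 X) := by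
  rcases le_total X 0 with hX | hX
  · simp [Ioc_eq_empty_of_le hX]
  have hdom : IntegrableOn (fun s : ℝ => C * s ^ (-α)) (Ioc 0 X) :=
    ((intervalIntegrable_iff_integrableOn_Ioc_of_le hX).1
      (intervalIntegral.intervalIntegrable_rpow' (by linarith))).const_mul C
  exact hdom.mono' hf ((ae_restrict_iff' measurableSet_Ioc).2 (Eventually.of_forall hC))

section FractionalDerivative

variable {α M C : ℝ} {ψ : ℝ → ℝ}

theorem integrableOn_sub_comp_sub_mul_rpow (hα0 : 0 < α) (hα1 : α < 1)
    (hψ : Differentiable ℝ ψ) (hM : ∀ x, |ψ x| ≤ M) (hC : ∀ x, |deriv ψ x| ≤ C) (ξ : ℝ) :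
    IntegrableOn (fun s => (ψ ξ - ψ (ξ - s)) * s ^ (-1 - α)) (Ioi 0) := by
  have hmeas : ∀ t : Set ℝ, AEStronglyMeasurable (fun s => (ψ ξ - ψ (ξ - s)) * s ^ (-1 - α))
      (volume.restrict t) := fun t =>
    ((continuous_const.sub (hψ.continuous.comp (continuous_sub_left ξ))).measurable.mul
      (measurable_id.pow_const _)).aestronglyMeasurable
  rw [← Ioc_union_Ioi_eq_Ioi zero_le_one]
  refine (integrableOn_Ioc_of_abs_le_mul_rpow_neg (C := C) hα1 (hmeas _) ?_).union ?_
  · intro s hs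
    have hlip := abs_sub_le_mul_abs_sub_of_abs_deriv_le hψ hC ξ (ξ - s)
    rw [sub_sub_cancel, abs_of_pos hs.1] at hlip
    calc |(ψ ξ - ψ (ξ - s)) * s ^ (-1 - α)| = |ψ ξ - ψ (ξ - s)| * s ^ (-1 - α) := by
          rw [abs_mul, abs_of_pos (rpow_pos_of_pos hs.1 _)]
      _ ≤ C * s * s ^ (-1 - α) := by gcongr; exact rpow_nonneg hs.1.le _
      _ = C * s ^ (-α) := by
          have hs0 : s ≠ 0 := hs.1.ne'
          rw [show -1 - α = -α - 1 by ring, rpow_sub_one hs0]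
          field_simp
  · refine ((integrableOn_Ioi_rpow_of_lt (a := -1 - α) (by linarith) one_pos).const_mul
      (2 * M)).mono' (hmeas _)
      ((ae_restrict_iff' measurableSet_Ioi).2 (Eventually.of_forall fun s hs => ?_))
    have hs0 : 0 < s := one_pos.trans hs
    rw [Real.norm_eq_abs, abs_mul, abs_of_pos (rpow_pos_of_pos hs0 _)]
    gcongr
    linarith [abs_sub (ψ ξ) (ψ (ξ - s)), hM ξ, hM (ξ - s)]

theorem integral_deriv_comp_sub_div_rpow (hα0 : 0 < α) (hα1 : α < 1)
    (hψ : Differentiable ℝ ψ) (hM : ∀ x, |ψ x| ≤ M) (hC : ∀ x, |deriv ψ x| ≤ C) {ξ : ℝ}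
    (hint : IntegrableOn (fun s => deriv ψ (ξ - s) / s ^ α) (Ioi 0)) :
    ∫ s in Ioi 0, deriv ψ (ξ - s) / s ^ α
      = α * ∫ s in Ioi 0, (ψ ξ - ψ (ξ - s)) * s ^ (-1 - α) := by
  set u : ℝ → ℝ := fun s => ψ ξ - ψ (ξ - s)
  have hu : ∀ s ∈ Ioi (0 : ℝ), HasDerivAt u (deriv ψ (ξ - s)) s := fun s _ => by
    simpa using ((hψ (ξ - s)).hasDerivAt.comp s ((hasDerivAt_id s).const_sub ξ)).const_sub (ψ ξ)
  have hv : ∀ s ∈ Ioi (0 : ℝ), HasDerivAt (fun s => s ^ (-α)) (-α * s ^ (-1 - α)) s :=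
    fun s hs => by
      simpa [show -α - 1 = -1 - α by ring] using hasDerivAt_rpow_const (p := -α) (Or.inl hs.ne')
  have hdiv : EqOn (fun s => deriv ψ (ξ - s) / s ^ α) (fun s => deriv ψ (ξ - s) * s ^ (-α))
      (Ioi 0) := fun s hs => by simp only [rpow_neg hs.le, div_eq_mul_inv]
  have hlip : ∀ s > 0, |u s| ≤ C * s := fun s hs => by
    simpa [u, abs_of_pos hs] using abs_sub_le_mul_abs_sub_of_abs_deriv_le hψ hC ξ (ξ - s)
  have hzero : Tendsto (fun s => u s * s ^ (-α)) (𝓝[>] 0) (𝓝 0) := by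
    have hlim : Tendsto (fun s : ℝ => C * s ^ (1 - α)) (𝓝[>] 0) (𝓝 0) := by
      simpa [zero_rpow (by linarith : 1 - α ≠ 0)] using
        (((continuous_rpow_const (q := 1 - α) (by linarith)).tendsto 0).const_mul C).mono_left
          nhdsWithin_le_nhds
    refine squeeze_zero_norm' ?_ hlim
    filter_upwards [self_mem_nhdsWithin] with s (hs : 0 < s)
    calc ‖u s * s ^ (-α)‖ = |u s| * s ^ (-α) := by
          rw [Real.norm_eq_abs, abs_mul, abs_of_pos (rpow_pos_of_pos hs _)]
      _ ≤ C * s * s ^ (-α) := by gcongr; exact hlip s hs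
      _ = C * s ^ (1 - α) := by rw [rpow_sub hs, rpow_one, rpow_neg hs.le]; ring
  have hinfty : Tendsto (fun s => u s * s ^ (-α)) atTop (𝓝 0) := by
    refine squeeze_zero_norm' ?_ (by simpa using (tendsto_rpow_neg_atTop hα0).const_mul (2 * M))
    filter_upwards [eventually_gt_atTop 0] with s hs
    rw [Real.norm_eq_abs, abs_mul, abs_of_pos (rpow_pos_of_pos hs _)]
    gcongr
    linarith [abs_sub (ψ ξ) (ψ (ξ - s)), hM ξ, hM (ξ - s)]
  have hibp := integral_Ioi_mul_deriv_eq_deriv_mul hu hv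
    (IntegrableOn.congr_fun ((integrableOn_sub_comp_sub_mul_rpow hα0 hα1 hψ hM hC ξ).const_mul (-α))
      (fun s _ => by simp only [Pi.mul_apply]; ring) measurableSet_Ioi)
    (hint.congr_fun hdiv measurableSet_Ioi) hzero hinfty
  rw [setIntegral_congr_fun measurableSet_Ioi hdiv]
  simp only [mul_left_comm _ (-α), integral_const_mul] at hibp
  linarith

theorem integrableOn_comp_sub_div_rpow_of_integrableOn {g : ℝ → ℝ} (hg : Continuous g)
    (hC : ∀ x, |g x| ≤ C) (hα0 : 0 ≤ α) (hα1 : α < 1) {ξ₁ ξ₂ : ℝ}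
    (h : IntegrableOn (fun s => g (ξ₁ - s) / s ^ α) (Ioi 0)) :
    IntegrableOn (fun s => g (ξ₂ - s) / s ^ α) (Ioi 0) := by
  set d := ξ₁ - ξ₂
  have hmeas : ∀ t : Set ℝ, AEStronglyMeasurable (fun s => g (ξ₂ - s) / s ^ α)
      (volume.restrict t) := fun t =>
    ((hg.comp (continuous_sub_left ξ₂)).measurable.div
      (measurable_id.pow_const α)).aestronglyMeasurable
  rw [← Ioc_union_Ioi_eq_Ioi (by positivity : (0 : ℝ) ≤ |d| + 1)]
  refine (integrableOn_Ioc_of_abs_le_mul_rpow_neg (C := C) hα1 (hmeas _) fun s hs => ?_).union ?_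
  · rw [abs_div, abs_of_pos (rpow_pos_of_pos hs.1 _), rpow_neg hs.1.le, div_eq_mul_inv]
    exact mul_le_mul_of_nonneg_right (hC _) (inv_nonneg.2 (rpow_nonneg hs.1.le _))
  have htail : IntegrableOn (fun s => g (ξ₂ - s) / (s + d) ^ α) (Ioi (|d| + 1)) := by
    have h' := h.mono_set (Ioi_subset_Ioi (by linarith [neg_abs_le d] : 0 ≤ |d| + 1 + d))
    rw [← (measurePreserving_add_right volume d).integrableOn_comp_preimage
      (measurableEmbedding_addRight d)] at h'
    rw [preimage_add_const_Ioi, add_sub_cancel_right] at h'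
    convert h' using 1
    funext s
    simp only [Function.comp_apply, d]
    ring_nf
  refine (htail.norm.const_mul ((1 + |d|) ^ α)).mono' (hmeas _)
    ((ae_restrict_iff' measurableSet_Ioi).2 (Eventually.of_forall fun s hs => ?_))
  have hs1 : 1 ≤ s := by linarith [abs_nonneg d, mem_Ioi.1 hs]
  have hsd : 0 < s + d := by linarith [neg_abs_le d, mem_Ioi.1 hs]
  have hweight : (s + d) ^ α ≤ (1 + |d|) ^ α * s ^ α := by
    rw [← mul_rpow (by positivity) (by linarith)]
    gcongr
    nlinarith [le_abs_self d, abs_nonneg d]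
  rw [Real.norm_eq_abs, Real.norm_eq_abs, abs_div, abs_div,
    abs_of_pos (rpow_pos_of_pos (by linarith) _), abs_of_pos (rpow_pos_of_pos hsd _)]
  calc |g (ξ₂ - s)| / s ^ α = |g (ξ₂ - s)| * (1 + |d|) ^ α / ((1 + |d|) ^ α * s ^ α) := by
        field_simp
    _ ≤ |g (ξ₂ - s)| * (1 + |d|) ^ α / (s + d) ^ α := by
        gcongr
    _ = (1 + |d|) ^ α * (|g (ξ₂ - s)| / (s + d) ^ α) := by ring

theorem fracD_eq_of_integrableOn (hα0 : 0 < α) (hα1 : α < 1) (hψ : Differentiable ℝ ψ)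
    (hM : ∀ x, |ψ x| ≤ M) (hC : ∀ x, |deriv ψ x| ≤ C) {ξ : ℝ}
    (hint : IntegrableOn (fun s => deriv ψ (ξ - s) / s ^ α) (Ioi 0)) :
    fracD α ψ ξ = α / Gamma (1 - α) * ∫ s in Ioi 0, (ψ ξ - ψ (ξ - s)) * s ^ (-1 - α) := by
  rw [fracD, integral_deriv_comp_sub_div_rpow hα0 hα1 hψ hM hC hint]
  ring

theorem fracD_eq_zero_of_not_integrableOn (hα0 : 0 < α) (hα1 : α < 1)
    (hψ' : Continuous (deriv ψ)) (hC : ∀ x, |deriv ψ x| ≤ C) {ξ₀ : ℝ}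
    (hint : ¬IntegrableOn (fun s => deriv ψ (ξ₀ - s) / s ^ α) (Ioi 0)) (ξ : ℝ) :
    fracD α ψ ξ = 0 := by
  rw [fracD, integral_undef fun h => hint
    (integrableOn_comp_sub_div_rpow_of_integrableOn hψ' hC hα0.le hα1 h), mul_zero]

theorem fracD_nonpos_of_forall_le (hα0 : 0 < α) (hα1 : α < 1) (hψ : Differentiable ℝ ψ)
    (hM : ∀ x, |ψ x| ≤ M) (hC : ∀ x, |deriv ψ x| ≤ C) {ξ : ℝ}
    (hle : ∀ s > 0, ψ ξ ≤ ψ (ξ - s)) : fracD α ψ ξ ≤ 0 := by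
  by_cases hint : IntegrableOn (fun s => deriv ψ (ξ - s) / s ^ α) (Ioi 0)
  · rw [fracD_eq_of_integrableOn hα0 hα1 hψ hM hC hint]
    refine mul_nonpos_of_nonneg_of_nonpos
      (div_nonneg hα0.le (Gamma_pos_of_pos (by linarith)).le)
      (setIntegral_nonpos measurableSet_Ioi fun s hs => ?_)
    exact mul_nonpos_of_nonpos_of_nonneg (by linarith [hle s hs]) (rpow_nonneg (le_of_lt hs) _)
  · rw [fracD, integral_undef hint, mul_zero]

end FractionalDerivative

noncomputable def fracL (α c κ : ℝ) (ψ : ℝ → ℝ) (ξ : ℝ) : ℝ :=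
  deriv (deriv ψ) ξ - c ^ α * fracD α ψ ξ - κ ^ 2 * ψ ξ

section MaximumPrinciple

variable {α c κ : ℝ} {ψ : ℝ → ℝ}

theorem nonneg_of_fracL_nonpos (hα : α ∈ Ioo 0 1) (hc : 0 < c) (hκ : 0 < κ) (hψ₁ : C1b ψ)
    (hψ₂ : ContDiff ℝ 2 ψ) (hL : ∀ ξ, fracL α c κ ψ ξ ≤ 0) (hbot : 0 ≤ liminf ψ atBot)
    (ξ : ℝ) : 0 ≤ ψ ξ := by
  obtain ⟨-, ⟨M, hM⟩, C, hC⟩ := hψ₁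
  by_contra! hξ
  set β := κ / 2
  have hβ : 0 < β := by positivity
  set ε := -ψ ξ / (2 * exp (β * ξ))
  have hε : 0 < ε := div_pos (by linarith) (by positivity)
  have hwξ : ψ ξ + ε * exp (β * ξ) < 0 := by
    have : ε * exp (β * ξ) = -ψ ξ / 2 := by simp only [ε]; field_simp
    linarith
  obtain ⟨ξ₀, hξ₀⟩ := exists_forall_add_mul_exp_le hψ₂.continuous
    (fun x => (abs_le.1 (hM x)).1) hε hβ (hwξ.trans_le hbot)
  have hle : ∀ s > 0, ψ ξ₀ ≤ ψ (ξ₀ - s) := fun s hs => by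
    have : exp (β * (ξ₀ - s)) ≤ exp (β * ξ₀) := exp_le_exp.2 (by nlinarith)
    nlinarith [hξ₀ (ξ₀ - s)]
  have hψ'' : 0 ≤ deriv (deriv ψ) ξ₀ + ε * β ^ 2 * exp (β * ξ₀) := by
    rw [← deriv_deriv_add_mul_exp (hψ₂.differentiable two_ne_zero)
      ((hψ₂.iterate_deriv' 1 1).differentiable one_ne_zero ξ₀)]
    have hψc := hψ₂.continuous
    exact IsLocalMin.deriv_deriv_nonneg (Eventually.of_forall hξ₀) (by fun_prop)
  have hfrac : c ^ α * fracD α ψ ξ₀ ≤ 0 :=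
    mul_nonpos_of_nonneg_of_nonpos (rpow_pos_of_pos hc α).le
      (fracD_nonpos_of_forall_le hα.1 hα.2 (hψ₂.differentiable two_ne_zero) hM hC hle)
  have hwξ₀ : κ ^ 2 * (ψ ξ₀ + ε * exp (β * ξ₀)) < 0 :=
    mul_neg_of_pos_of_neg (by positivity) ((hξ₀ ξ).trans_lt hwξ)
  have hβκ : ε * β ^ 2 * exp (β * ξ₀) = κ ^ 2 / 4 * (ε * exp (β * ξ₀)) := by
    simp only [β]; ring
  have hpos : 0 < κ ^ 2 * (ε * exp (β * ξ₀)) := by positivity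
  have hLξ₀ := hL ξ₀
  simp only [fracL] at hLξ₀
  nlinarith

theorem eqOn_zero_Iic_of_integrableOn (hα : α ∈ Ioo 0 1) (hc : 0 < c) (hψ₁ : C1b ψ)
    (hnonneg : ∀ x, 0 ≤ ψ x) {ξ₀ : ℝ} (hL : fracL α c κ ψ ξ₀ ≤ 0) (hξ₀ : ψ ξ₀ = 0)
    (hint : IntegrableOn (fun s => deriv ψ (ξ₀ - s) / s ^ α) (Ioi 0)) : EqOn ψ 0 (Iic ξ₀) := by
  obtain ⟨hψ, ⟨M, hM⟩, C, hC⟩ := hψ₁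
  intro ξ hξ
  by_contra hne
  have hpos : 0 < ψ ξ := (hnonneg ξ).lt_of_ne' hne
  have hlt : ξ < ξ₀ := hξ.lt_of_ne (by rintro rfl; exact hne hξ₀)
  set K : ℝ → ℝ := fun s => ψ (ξ₀ - s) * s ^ (-1 - α)
  have hK : (fun s => (ψ ξ₀ - ψ (ξ₀ - s)) * s ^ (-1 - α)) = fun s => -K s := by
    funext s
    simp only [K, hξ₀]
    ring
  have hKint : IntegrableOn K (Ioi 0) := by
    simpa [hK] using (integrableOn_sub_comp_sub_mul_rpow hα.1 hα.2
      (hψ.differentiable one_ne_zero) hM hC ξ₀).neg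
  have hKpos : 0 < ∫ s in Ioi 0, K s :=
    setIntegral_pos_of_continuousOn isOpen_Ioi
      ((hψ.continuous.comp (continuous_sub_left ξ₀)).continuousOn.mul
        (continuousOn_id.rpow_const fun s hs => Or.inl (ne_of_gt hs)))
      hKint (fun s hs => mul_nonneg (hnonneg _) (rpow_nonneg (le_of_lt hs) _))
      (sub_pos.2 hlt) (mul_pos (by simpa using hpos) (rpow_pos_of_pos (sub_pos.2 hlt) _))
  have hfrac : fracD α ψ ξ₀ < 0 := by
    rw [fracD_eq_of_integrableOn hα.1 hα.2 (hψ.differentiable one_ne_zero) hM hC hint, hK,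
      integral_neg]
    exact mul_neg_of_pos_of_neg (div_pos hα.1 (Gamma_pos_of_pos (by linarith [hα.2])))
      (neg_neg_of_pos hKpos)
  have hψ'' : 0 ≤ deriv (deriv ψ) ξ₀ :=
    IsLocalMin.deriv_deriv_nonneg (Eventually.of_forall fun y => hξ₀ ▸ hnonneg y)
      hψ.continuous.continuousAt
  simp only [fracL, hξ₀] at hL
  nlinarith [mul_neg_of_pos_of_neg (rpow_pos_of_pos hc α) hfrac]

theorem eqOn_zero_Iic_of_not_integrableOn (hα : α ∈ Ioo 0 1) (hκ : 0 < κ) (hψ₁ : C1b ψ)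
    (hψ₂ : ContDiff ℝ 2 ψ) (hnonneg : ∀ x, 0 ≤ ψ x) (hL : ∀ ξ, fracL α c κ ψ ξ ≤ 0) {ξ₀ : ℝ}
    (hξ₀ : ψ ξ₀ = 0) (hint : ¬IntegrableOn (fun s => deriv ψ (ξ₀ - s) / s ^ α) (Ioi 0)) :
    EqOn ψ 0 (Iic ξ₀) := by
  obtain ⟨hψ, -, C, hC⟩ := hψ₁
  refine eqOn_zero_Iic_of_deriv_deriv_le hκ hψ₂ hnonneg (fun x => ?_) hξ₀
  have hLx := hL x
  rw [fracL, fracD_eq_zero_of_not_integrableOn hα.1 hα.2 (hψ.continuous_deriv le_rfl) hC hint x]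
    at hLx
  linarith

end MaximumPrinciple

theorem maximum_principle_general
    (α c κ : ℝ) (hα : α ∈ Set.Ioo (0 : ℝ) 1) (hc : 0 < c) (hκ : 0 < κ)
    (ψ : ℝ → ℝ) (hψ1 : C1b ψ) (hψ2 : ContDiff ℝ 2 ψ)
    (hL : ∀ ξ, deriv (deriv ψ) ξ - c ^ α * fracD α ψ ξ - κ ^ 2 * ψ ξ ≤ 0)
    (hbot : 0 ≤ Filter.liminf ψ atBot) :
    (∀ ξ, 0 ≤ ψ ξ) ∧ ∀ ξs : ℝ, ψ ξs = 0 → ∀ ξ ≤ ξs, ψ ξ = 0 := by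
  have hnonneg := nonneg_of_fracL_nonpos hα hc hκ hψ1 hψ2 hL hbot
  refine ⟨hnonneg, fun ξs hξs ξ hξ => ?_⟩
  by_cases hint : IntegrableOn (fun s => deriv ψ (ξs - s) / s ^ α) (Ioi 0)
  · exact eqOn_zero_Iic_of_integrableOn hα hc hψ1 hnonneg (hL ξs) hξs hint hξ
  · exact eqOn_zero_Iic_of_not_integrableOn hα hκ hψ1 hψ2 hnonneg hL hξs hint hξ

/-- Maximum principle for `L ψ := ψ'' - c^α ∂^α_ξ ψ - κ² ψ`: if `Lψ ≤ 0` on ℝ and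
`liminf_{ξ→-∞} ψ ≥ 0`, `limsup_{ξ→+∞} ψ ≥ 0`, then `ψ ≥ 0`; moreover if `ψ(ξ*) = 0`
for some `ξ*`, then `ψ ≡ 0` on `(-∞, ξ*]`. -/
theorem maximum_principle
    (α c κ : ℝ) (hα : α ∈ Set.Ioo (0 : ℝ) 1) (hc : 0 < c) (hκ : 0 < κ)
    (ψ : ℝ → ℝ) (hψ1 : C1b ψ) (hψ2 : ContDiff ℝ 2 ψ)
    (hL : ∀ ξ, deriv (deriv ψ) ξ - c ^ α * fracD α ψ ξ - κ ^ 2 * ψ ξ ≤ 0)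
    (hbot : 0 ≤ Filter.liminf ψ atBot) (htop : 0 ≤ Filter.limsup ψ atTop) :
    (∀ ξ, 0 ≤ ψ ξ) ∧ ∀ ξs : ℝ, ψ ξs = 0 → ∀ ξ ≤ ξs, ψ ξ = 0 :=
  maximum_principle_general α c κ hα hc hκ ψ hψ1 hψ2 hL hbot
end

section
/- Let α ∈ (0,1), r > 0, c > 0, and let V(λ) := λ² - (cλ)^α + r for λ > 0, with c*_α := (2^{1/α}/√α) · (r/(2-α))^{(2-α)/(2α)}. Then: (i) if c > c*_α, V has exactly two positive roots λ₁ < λ₂, and V(λ) < 0 for λ ∈ (λ₁, λ₂); (ii) if c = c*_α, V has a unique positive root; (iii) if 0 < c < c*_α, V has no positive roots, i.e. V(λ) > 0 for all λ > 0. -/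
/-!
On `[0, ∞)` the function `V` decreases up to the critical point `λ*` solving
`λ*^(2-α) = α c^α / 2` and increases after it, so the number of positive roots is read off the
sign of the minimum `V(λ*)`. A direct computation gives
`V(λ*) = (2-α)/2 · (α/2)^(α/(2-α)) · (c*_α ^ p - c ^ p)` with `p = 2α/(2-α) > 0`, whose sign is
that of `c*_α - c`. Since `V(0) = r > 0` and `V` returns to the value `r` at `(c^α)^(1/(2-α)) ≥ λ*`,
the intermediate value theorem provides the roots.
-/

open Real MeasureTheory Filter Topology

/-- The characteristic function `V(λ) = λ² - (cλ)^α + r`. -/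
noncomputable def Vchar (α c r l : ℝ) : ℝ := l ^ 2 - (c * l) ^ α + r

section Valley

variable {f : ℝ → ℝ} {a m : ℝ}

theorem valley_min_lt (hanti : StrictAntiOn f (Set.Icc a m)) (hmono : StrictMonoOn f (Set.Ici m))
    {x : ℝ} (hax : a ≤ x) (hxm : x ≠ m) : f m < f x := by
  rcases hxm.lt_or_gt with hlt | hgt
  · exact hanti ⟨hax, hlt.le⟩ ⟨hax.trans hlt.le, le_rfl⟩ hlt
  · exact hmono Set.self_mem_Ici hgt.le hgt

theorem valley_pos (hanti : StrictAntiOn f (Set.Icc a m)) (hmono : StrictMonoOn f (Set.Ici m))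
    (hm : 0 < f m) (x : ℝ) (hx : a < x) : 0 < f x := by
  rcases eq_or_ne x m with rfl | hxm
  · exact hm
  · exact hm.trans (valley_min_lt hanti hmono hx.le hxm)

theorem valley_existsUnique_zero (hanti : StrictAntiOn f (Set.Icc a m))
    (hmono : StrictMonoOn f (Set.Ici m)) (ham : a < m) (hm : f m = 0) :
    ∃! x, a < x ∧ f x = 0 := by
  refine ⟨m, ⟨ham, hm⟩, fun x ⟨hx, hfx⟩ => ?_⟩
  by_contra hxm
  exact (valley_min_lt hanti hmono hx.le hxm).ne (hm.trans hfx.symm)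

theorem valley_two_zeros (hf : ContinuousOn f (Set.Ici a))
    (hanti : StrictAntiOn f (Set.Icc a m)) (hmono : StrictMonoOn f (Set.Ici m))
    (ham : a ≤ m) (ha : 0 < f a) (hm : f m < 0) {b : ℝ} (hmb : m ≤ b) (hb : 0 < f b) :
    ∃ x₁ x₂, a < x₁ ∧ x₁ < x₂ ∧ f x₁ = 0 ∧ f x₂ = 0 ∧
      (∀ x, a < x → f x = 0 → x = x₁ ∨ x = x₂) ∧ ∀ x ∈ Set.Ioo x₁ x₂, f x < 0 := by
  obtain ⟨x₁, ⟨hax₁, hx₁m⟩, hx₁⟩ := intermediate_value_Icc' ham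
    (hf.mono Set.Icc_subset_Ici_self) ⟨hm.le, ha.le⟩
  obtain ⟨x₂, ⟨hmx₂, -⟩, hx₂⟩ := intermediate_value_Icc hmb
    (hf.mono (Set.Icc_subset_Ici_self.trans (Set.Ici_subset_Ici.2 ham))) ⟨hm.le, hb.le⟩
  have hax₁ : a < x₁ := hax₁.lt_of_ne (by rintro rfl; exact ha.ne' hx₁)
  have hx₁m : x₁ < m := hx₁m.lt_of_ne (by rintro rfl; exact hm.ne hx₁)
  have hmx₂ : m < x₂ := hmx₂.lt_of_ne (by rintro rfl; exact hm.ne hx₂)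
  have hx₁I : x₁ ∈ Set.Icc a m := ⟨hax₁.le, hx₁m.le⟩
  refine ⟨x₁, x₂, hax₁, hx₁m.trans hmx₂, hx₁, hx₂, fun x hx hfx => ?_, fun x ⟨hx₁x, hxx₂⟩ => ?_⟩
  · rcases le_or_gt x m with hxm | hmx
    · exact .inl (hanti.injOn ⟨hx.le, hxm⟩ hx₁I (hfx.trans hx₁.symm))
    · exact .inr (hmono.injOn hmx.le hmx₂.le (hfx.trans hx₂.symm))
  · rcases le_or_gt x m with hxm | hmx
    · exact hx₁ ▸ hanti hx₁I ⟨hax₁.le.trans hx₁x.le, hxm⟩ hx₁x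
    · exact hx₂ ▸ hmono hmx.le hmx₂.le hxx₂

end Valley

noncomputable def vcharArgmin (α c : ℝ) : ℝ := (α * c ^ α / 2) ^ (2 - α)⁻¹

section Vchar

variable {α c r : ℝ}

theorem vcharArgmin_pos (hα : 0 < α) (hc : 0 < c) : 0 < vcharArgmin α c := by
  unfold vcharArgmin; positivity

theorem vcharArgmin_rpow (hα : 0 < α) (hα2 : α < 2) (hc : 0 < c) :
    vcharArgmin α c ^ (2 - α) = α * c ^ α / 2 :=
  rpow_inv_rpow (by positivity) (by linarith)

theorem Vchar_eq_of_nonneg (hc : 0 ≤ c) {l : ℝ} (hl : 0 ≤ l) :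
    Vchar α c r l = l ^ α * (l ^ (2 - α) - c ^ α) + r := by
  have hsq : l ^ 2 = l ^ (2 - α) * l ^ α := by
    rw [← rpow_add' hl (by norm_num), sub_add_cancel, rpow_two]
  rw [Vchar, mul_rpow hc hl, hsq]
  ring

theorem Vchar_zero (hα : 0 < α) : Vchar α c r 0 = r := by
  simp [Vchar, zero_rpow hα.ne']

theorem continuous_Vchar (hα : 0 < α) : Continuous (Vchar α c r) := by
  unfold Vchar
  have := continuous_rpow_const (q := α) hα.le
  fun_prop

theorem hasDerivAt_Vchar (hc : 0 < c) {l : ℝ} (hl : 0 < l) :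
    HasDerivAt (Vchar α c r) (l ^ (α - 1) * (2 * l ^ (2 - α) - α * c ^ α)) l := by
  have hsq : HasDerivAt (fun l : ℝ => l ^ 2) (2 * l) l := by simpa using hasDerivAt_pow 2 l
  have hpow : HasDerivAt (fun l : ℝ => (c * l) ^ α) (α * (c * l) ^ (α - 1) * (c * 1)) l :=
    (hasDerivAt_rpow_const (.inl (by positivity))).comp l ((hasDerivAt_id l).const_mul c)
  refine ((hsq.sub hpow).add_const r).congr_deriv ?_
  have hl2 : l ^ (α - 1) * l ^ (2 - α) = l := by rw [← rpow_add hl]; norm_num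
  have hc1 : c ^ (α - 1) * c = c ^ α := by rw [← rpow_add_one hc.ne']; ring_nf
  rw [mul_rpow hc.le hl.le]
  linear_combination (-2) * hl2 - α * l ^ (α - 1) * hc1

theorem strictAntiOn_Vchar (hα : 0 < α) (hα2 : α < 2) (hc : 0 < c) :
    StrictAntiOn (Vchar α c r) (Set.Icc 0 (vcharArgmin α c)) := by
  refine strictAntiOn_of_deriv_neg (convex_Icc _ _) (continuous_Vchar hα).continuousOn ?_
  rw [interior_Icc]
  intro l ⟨hl, hlm⟩
  rw [(hasDerivAt_Vchar hc hl).deriv]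
  have hlt : l ^ (2 - α) < α * c ^ α / 2 :=
    vcharArgmin_rpow hα hα2 hc ▸ rpow_lt_rpow hl.le hlm (by linarith)
  exact mul_neg_of_pos_of_neg (by positivity) (by linarith)

theorem strictMonoOn_Vchar (hα : 0 < α) (hα2 : α < 2) (hc : 0 < c) :
    StrictMonoOn (Vchar α c r) (Set.Ici (vcharArgmin α c)) := by
  refine strictMonoOn_of_deriv_pos (convex_Ici _) (continuous_Vchar hα).continuousOn ?_
  rw [interior_Ici]
  intro l (hml : vcharArgmin α c < l)
  have hl := (vcharArgmin_pos hα hc).trans hml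
  rw [(hasDerivAt_Vchar hc hl).deriv]
  have hgt : α * c ^ α / 2 < l ^ (2 - α) :=
    vcharArgmin_rpow hα hα2 hc ▸ rpow_lt_rpow (vcharArgmin_pos hα hc).le hml (by linarith)
  exact mul_pos (by positivity) (by linarith)

theorem vcharArgmin_le (hα : 0 ≤ α) (hα2 : α < 2) (hc : 0 ≤ c) :
    vcharArgmin α c ≤ (c ^ α) ^ (2 - α)⁻¹ := by
  have hcα : 0 ≤ c ^ α := rpow_nonneg hc α
  exact rpow_le_rpow (by positivity) (by nlinarith) (inv_nonneg.2 (by linarith))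

theorem Vchar_rpow_inv (hα2 : α < 2) (hc : 0 ≤ c) : Vchar α c r ((c ^ α) ^ (2 - α)⁻¹) = r := by
  have hcα : 0 ≤ c ^ α := rpow_nonneg hc α
  rw [Vchar_eq_of_nonneg hc (by positivity), rpow_inv_rpow hcα (by linarith)]
  ring

theorem rpow_mul_vcharArgmin_rpow (hα : 0 < α) (hα2 : α < 2) (hc : 0 < c) :
    c ^ α * vcharArgmin α c ^ α = (α / 2) ^ (α / (2 - α)) * c ^ (2 * α / (2 - α)) := by
  have h2α : 0 < 2 - α := by linarith
  rw [vcharArgmin, ← rpow_mul (by positivity), mul_div_right_comm,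
    mul_rpow (by positivity) (by positivity), ← rpow_mul hc.le, mul_left_comm, ← rpow_add hc]
  congr 2
  · field_simp
  · field_simp
    ring

theorem cStar_pos (hα : 0 < α) (hα2 : α < 2) (hr : 0 < r) : 0 < cStar α r := by
  have : 0 < 2 - α := by linarith
  have : 0 < √α := sqrt_pos.2 hα
  unfold cStar; positivity

theorem rpow_mul_cStar_rpow (hα : 0 < α) (hα2 : α < 2) (hr : 0 < r) :
    (α / 2) ^ (α / (2 - α)) * cStar α r ^ (2 * α / (2 - α)) = 2 * r / (2 - α) := by
  have h2α : 0 < 2 - α := by linarith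
  have hsq : 0 < √α := sqrt_pos.2 hα
  have hcS := cStar_pos hα hα2 hr
  refine log_injOn_pos (by positivity : 0 < (α / 2) ^ (α / (2 - α)) * cStar α r ^ (2 * α / (2 - α)))
    (by positivity : 0 < 2 * r / (2 - α)) ?_
  rw [log_mul (by positivity) (by positivity), log_rpow (by positivity), log_rpow hcS, cStar,
    log_mul (by positivity) (by positivity), log_div (by positivity) hsq.ne',
    log_rpow (by norm_num), log_rpow (by positivity), log_sqrt hα.le,
    log_div hr.ne' h2α.ne', log_div hα.ne' (by norm_num),
    log_div (by positivity) h2α.ne', log_mul two_ne_zero hr.ne']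
  field_simp
  ring

theorem Vchar_vcharArgmin (hα : 0 < α) (hα2 : α < 2) (hc : 0 < c) (hr : 0 < r) :
    Vchar α c r (vcharArgmin α c) = (2 - α) / 2 * (α / 2) ^ (α / (2 - α)) *
      (cStar α r ^ (2 * α / (2 - α)) - c ^ (2 * α / (2 - α))) := by
  have hφ := rpow_mul_vcharArgmin_rpow hα hα2 hc
  have hφStar := rpow_mul_cStar_rpow hα hα2 hr
  rw [Vchar_eq_of_nonneg hc.le (vcharArgmin_pos hα hc).le, vcharArgmin_rpow hα hα2 hc]
  have hr' : (2 - α) / 2 * (2 * r / (2 - α)) = r := by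
    have : 2 - α ≠ 0 := by linarith
    field_simp
  linear_combination (α / 2 - 1) * hφ - (2 - α) / 2 * hφStar - hr'

end Vchar

/-- Positive roots of `V(λ) = λ² - (cλ)^α + r`: two roots above the critical speed,
one at the critical speed, none below. -/
theorem Vchar_roots (α r c : ℝ) (hα : α ∈ Set.Ioo (0 : ℝ) 1) (hr : 0 < r) (hc : 0 < c) :
    (cStar α r < c → ∃ l₁ l₂ : ℝ, 0 < l₁ ∧ l₁ < l₂ ∧
      Vchar α c r l₁ = 0 ∧ Vchar α c r l₂ = 0 ∧
      (∀ l : ℝ, 0 < l → Vchar α c r l = 0 → l = l₁ ∨ l = l₂) ∧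
      ∀ l ∈ Set.Ioo l₁ l₂, Vchar α c r l < 0) ∧
    (c = cStar α r → ∃! l : ℝ, 0 < l ∧ Vchar α c r l = 0) ∧
    (c < cStar α r → ∀ l : ℝ, 0 < l → 0 < Vchar α c r l) := by
  obtain ⟨hα0, hα1⟩ := hα
  have hα2 : α < 2 := by linarith
  have hanti := strictAntiOn_Vchar (r := r) hα0 hα2 hc
  have hmono := strictMonoOn_Vchar (r := r) hα0 hα2 hc
  have hmin := Vchar_vcharArgmin hα0 hα2 hc hr
  have hK : 0 < (2 - α) / 2 * (α / 2) ^ (α / (2 - α)) := by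
    have : 0 < 2 - α := by linarith
    positivity
  have hp : 0 < 2 * α / (2 - α) := div_pos (by linarith) (by linarith)
  refine ⟨fun hlt => ?_, fun heq => ?_, fun hgt => ?_⟩
  · refine valley_two_zeros (continuous_Vchar hα0).continuousOn hanti hmono
      (vcharArgmin_pos hα0 hc).le (by rwa [Vchar_zero hα0]) ?_
      (vcharArgmin_le hα0.le hα2 hc.le) (by rwa [Vchar_rpow_inv hα2 hc.le])
    rw [hmin]
    exact mul_neg_of_pos_of_neg hK (sub_neg.2 (rpow_lt_rpow (cStar_pos hα0 hα2 hr).le hlt hp))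
  · exact valley_existsUnique_zero hanti hmono (vcharArgmin_pos hα0 hc)
      (by rw [hmin, heq, sub_self, mul_zero])
  · exact valley_pos hanti hmono
      (hmin ▸ mul_pos hK (sub_pos.2 (rpow_lt_rpow hc.le hgt hp)))
end
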